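/- arXiv:2205.07158 — 2 statements merged into one kernel-verified Lean document; each statement's English description precedes it below -/
import Mathlib

section
/- Let G be a finite group of order n acting on a connected smooth projective curve X over k with quotient map π: X → X/G = Y, let χ: G → k* be a 1-dimensional character and f_χ ∈ K(X)* with σ f_χ = χ(σ) f_χ for all σ ∈ G. Then for every branch point Q ∈ Bl(Y): n·⟨v_Q(f_χ^n)/n⟩ = ⟨χ, R_{G,Q}⟩_G, where ⟨r⟩ = r − ⌊r⌋ is the fractional part. In particular this quantity is independent of the choice of f_χ. -/
/-!
For `P` over `Q`, letting `σ ∈ G_P` act on `f_χ` gives `χ|_{G_P} = θ_P ^ v_P(f_χ)`; as `θ_P` is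
faithful on the cyclic group `G_P` of order `e_P`, this forces `a_P = v_P(f_χ) mod e_P`.
Pulling back `g` gives `e_P · v_Q(g) = n · v_P(f_χ)`. The fibre over `Q` is a single orbit, of
size `s = n / e`, on which `e_P`, hence `v_P(f_χ) = v`, hence `a_P`, are constant. So
`v_Q(g) = s v` and `n ⟨v_Q(g) / n⟩ = (s v mod s e) = s (v mod e) = ∑_{P ↦ Q} a_P`.
-/

open MulAction

theorem natCard_dvd_of_forall_zpow_eq_one {R H : Type*} [CommRing R] [IsDomain R] [Group H]
    [Finite H] (ψ : H →* Rˣ) (hψ : Function.Injective ψ) {d : ℤ} (hd : ∀ σ, ψ σ ^ d = 1) :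
    (Nat.card H : ℤ) ∣ d := by
  have : IsCyclic H :=
    isCyclic_of_injective_ringHom ((Units.coeHom R).comp ψ) (Units.val_injective.comp hψ)
  obtain ⟨σ, hσ⟩ := IsCyclic.exists_ofOrder_eq_natCard (α := H)
  rw [← hσ, ← orderOf_injective ψ hψ σ]
  exact orderOf_dvd_iff_zpow_eq_one.mpr (hd σ)

theorem Subgroup.emod_natCard_eq_of_zpow_eq {R G : Type*} [CommRing R] [IsDomain R] [Group G]
    (H : Subgroup G) [Finite H] (θ : G →* Rˣ) (hθ : ∀ σ ∈ H, θ σ = 1 → σ = 1)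
    {v : ℤ} {a : ℕ} (ha : a < Nat.card H) (h : ∀ σ ∈ H, θ σ ^ v = θ σ ^ a) :
    v % Nat.card H = a := by
  have hinj : Function.Injective (θ.comp H.subtype) :=
    (injective_iff_map_eq_one _).mpr fun σ hσ => Subtype.ext (hθ σ σ.2 hσ)
  have hdvd : (Nat.card H : ℤ) ∣ v - a :=
    natCard_dvd_of_forall_zpow_eq_one _ hinj fun σ => by
      simp [zpow_sub, h σ σ.2]
  exact (Int.modEq_iff_dvd.mpr hdvd).symm.eq.trans
    (Int.emod_eq_of_lt (by positivity) (by exact_mod_cast ha))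

theorem MulAction.natCard_stabilizer_of_mem_orbit {G α : Type*} [Group G] [MulAction G α]
    {a b : α} (h : b ∈ orbit G a) : Nat.card (stabilizer G b) = Nat.card (stabilizer G a) := by
  obtain ⟨g, rfl⟩ := h
  rw [stabilizer_smul_eq_stabilizer_map_conj]
  exact Subgroup.card_map_of_injective (MulAut.conj g).injective

theorem finsum_mem_const {α M : Type*} [AddCommMonoid M] {s : Set α} (hs : s.Finite) (c : M) :
    ∑ᶠ x ∈ s, c = s.ncard • c := by
  rw [finsum_mem_eq_finite_toFinset_sum _ hs, Finset.sum_const, Set.ncard_eq_toFinset_card _ hs]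

theorem val_pow_of_val_mul {F : Type*} [Field F] {v : F → ℤ}
    (hv : ∀ f g, f ≠ 0 → g ≠ 0 → v (f * g) = v f + v g) {f : F} (hf : f ≠ 0) (m : ℕ) :
    v (f ^ m) = m * v f := by
  induction m with
  | zero => simpa using hv 1 1 one_ne_zero one_ne_zero
  | succ m ih =>
    rw [pow_succ, hv _ _ (pow_ne_zero _ hf) hf, ih]
    push_cast
    ring

theorem Int.natCast_mul_fract_div_of_mul_eq {s e : ℕ} {m v : ℤ} (he : e ≠ 0)
    (h : (e : ℤ) * m = (s * e : ℕ) * v) :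
    ((s * e : ℕ) : ℚ) * Int.fract ((m : ℚ) / (s * e : ℕ)) = s * ((v % e : ℤ) : ℚ) := by
  have hm : m = s * v := by
    refine mul_left_cancel₀ (by exact_mod_cast he : (e : ℤ) ≠ 0) ?_
    rw [h]
    push_cast
    ring
  rcases Nat.eq_zero_or_pos s with rfl | hs
  · simp
  have hse : ((s * e : ℕ) : ℚ) ≠ 0 := by positivity
  rw [Int.fract_div_intCast_eq_div_intCast_mod, mul_div_cancel₀ _ hse, hm, Nat.cast_mul,
    Int.mul_emod_mul_of_pos _ _ (by exact_mod_cast hs)]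
  push_cast
  rfl

theorem chevalley_weil_stmt_4_general
    (k : Type*) [Field k]
    (G : Type*) [Group G] [Fintype G]
    (n : ℕ) (hn : n = Fintype.card G)
    -- the points of X and of Y = X/G
    (X Y : Type*) [MulAction G X]
    (π : X → Y)
    (horb : ∀ P P' : X, π P = π P' ↔ ∃ σ : G, σ • P = P')
    -- ramification indices: order of the stabilizer
    (e : X → ℕ)
    (he : ∀ P : X, e P = Nat.card (MulAction.stabilizer G P))
    -- the function fields K(X), K(Y), with G acting on K(X) by k-algebra maps
    (FX FY : Type*) [Field FX] [Field FY] [Algebra k FX] [Algebra k FY]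
    [MulSemiringAction G FX]
    -- valuations at the points
    (vX : X → FX → ℤ) (vY : Y → FY → ℤ)
    (hvXmul : ∀ (P : X) (f g : FX), f ≠ 0 → g ≠ 0 → vX P (f * g) = vX P f + vX P g)
    -- the pullback π* : K(Y) → K(X)
    (pb : FY →ₐ[k] FX)
    (hpbv : ∀ (g : FY) (P : X), g ≠ 0 → vX P (pb g) = (e P : ℤ) * vY (π P) g)
    -- the local characters θ_P of the stabilizers G_P
    (θ : X → (G →* kˣ))
    (hθ : ∀ (P : X) (σ : G), σ ∈ MulAction.stabilizer G P →
      ∀ (f : FX) (c : kˣ), f ≠ 0 → σ • f = ((c : kˣ) : k) • f →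
        c = (θ P σ) ^ (vX P f))
    (hθfaith : ∀ (P : X) (σ : G), σ ∈ MulAction.stabilizer G P → θ P σ = 1 → σ = 1)
    -- a 1-dimensional character χ : G → k* and f_χ ∈ K(X)* with σ f_χ = χ(σ) f_χ
    (χ : G →* kˣ)
    (fχ : FX) (hfχ : fχ ≠ 0)
    (hfχeq : ∀ σ : G, σ • fχ = ((χ σ : kˣ) : k) • fχ)
    -- a P = ⟨χ, R_{G,P}⟩_G is the unique 0 ≤ a_P < e_P with χ|_{G_P} = θ_P^{a_P}
    (a : X → ℕ) (ha : ∀ P : X, a P < e P)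
    (haχ : ∀ (P : X) (σ : G), σ ∈ MulAction.stabilizer G P → χ σ = (θ P σ) ^ (a P))
    -- f_χⁿ is G-invariant, hence comes from a rational function g on Y
    (g : FY) (hg : pb g = fχ ^ n) :
    -- for every branch point Q: n⟨v_Q(f_χⁿ)/n⟩ = ⟨χ, R_{G,Q}⟩_G
    ∀ Q : Y, (∃ P : X, π P = Q ∧ 1 < e P) →
      (n : ℚ) * Int.fract ((vY Q g : ℚ) / (n : ℚ)) = ∑ᶠ P ∈ π ⁻¹' {Q}, (a P : ℚ) := by
  rintro Q ⟨P₀, rfl, -⟩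
  have hg₀ : g ≠ 0 := by
    rintro rfl
    exact pow_ne_zero n hfχ (by rw [← hg, map_zero])
  have hval : ∀ P, (e P : ℤ) * vY (π P) g = n * vX P fχ := fun P => by
    rw [← hpbv g P hg₀, hg, val_pow_of_val_mul (hvXmul P) hfχ]
  have ha_emod : ∀ P, vX P fχ % e P = a P := fun P => by
    rw [he]
    refine (stabilizer G P).emod_natCard_eq_of_zpow_eq (θ P) (hθfaith P) (he P ▸ ha P)
      fun σ hσ => ?_
    rw [← hθ P σ hσ fχ (χ σ) hfχ (hfχeq σ), haχ P σ hσ]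
  have ha_orbit : ∀ P ∈ orbit G P₀, a P = a P₀ := fun P hP => by
    have he_eq : e P = e P₀ := by rw [he, he, natCard_stabilizer_of_mem_orbit hP]
    have hv_eq : vX P fχ = vX P₀ fχ := by
      have := hval P
      rw [he_eq, ((horb P₀ P).mpr hP).symm, hval P₀] at this
      exact (mul_left_cancel₀ (by exact_mod_cast hn ▸ Fintype.card_ne_zero) this).symm
    have := ha_emod P
    rw [he_eq, hv_eq, ha_emod P₀] at this
    exact_mod_cast this.symm
  have hcard : (orbit G P₀).ncard * e P₀ = n := by
    rw [he, hn, ← index_stabilizer, mul_comm, Subgroup.card_mul_index, Nat.card_eq_fintype_card]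
  have hfiber : π ⁻¹' {π P₀} = orbit G P₀ := Set.ext fun P => eq_comm.trans (horb P₀ P)
  rw [hfiber, finsum_mem_congr rfl fun P hP => by rw [ha_orbit P hP],
    finsum_mem_const (s := orbit G P₀) (Set.finite_range _), nsmul_eq_mul, ← hcard,
    Int.natCast_mul_fract_div_of_mul_eq (he P₀ ▸ Nat.card_pos.ne') (hcard ▸ hval P₀),
    ha_emod P₀, Int.cast_natCast]

theorem chevalley_weil_stmt_4
    (k : Type*) [Field k] [IsAlgClosed k]
    (G : Type*) [Group G] [Fintype G]
    (n : ℕ) (hn : n = Fintype.card G)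
    -- char k = 0 or char k ∤ n
    (hchar : ∀ p : ℕ, p.Prime → (p : k) = 0 → ¬ p ∣ n)
    -- the points of X and of Y = X/G
    (X Y : Type*) [MulAction G X]
    (π : X → Y) (hπsurj : Function.Surjective π)
    (hπG : ∀ (σ : G) (P : X), π (σ • P) = π P)
    (horb : ∀ P P' : X, π P = π P' ↔ ∃ σ : G, σ • P = P')
    -- ramification indices: order of the stabilizer
    (e : X → ℕ)
    (he : ∀ P : X, e P = Nat.card (MulAction.stabilizer G P))
    -- the function fields K(X), K(Y), with G acting on K(X) by k-algebra maps
    (FX FY : Type*) [Field FX] [Field FY] [Algebra k FX] [Algebra k FY]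
    [MulSemiringAction G FX] [SMulCommClass G k FX]
    -- valuations at the points
    (vX : X → FX → ℤ) (vY : Y → FY → ℤ)
    (hvXmul : ∀ (P : X) (f g : FX), f ≠ 0 → g ≠ 0 → vX P (f * g) = vX P f + vX P g)
    (hvXfin : ∀ f : FX, f ≠ 0 → {P : X | vX P f ≠ 0}.Finite)
    (hvXG : ∀ (σ : G) (P : X) (f : FX), vX (σ • P) (σ • f) = vX P f)
    -- the pullback π* : K(Y) → K(X)
    (pb : FY →ₐ[k] FX)
    (hpbG : ∀ (σ : G) (g : FY), σ • (pb g) = pb g)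
    (hpbv : ∀ (g : FY) (P : X), g ≠ 0 → vX P (pb g) = (e P : ℤ) * vY (π P) g)
    -- the local characters θ_P of the stabilizers G_P
    (θ : X → (G →* kˣ))
    (hθ : ∀ (P : X) (σ : G), σ ∈ MulAction.stabilizer G P →
      ∀ (f : FX) (c : kˣ), f ≠ 0 → σ • f = ((c : kˣ) : k) • f →
        c = (θ P σ) ^ (vX P f))
    (hθord : ∀ (P : X) (σ : G), σ ∈ MulAction.stabilizer G P → (θ P σ) ^ (e P) = 1)
    (hθfaith : ∀ (P : X) (σ : G), σ ∈ MulAction.stabilizer G P → θ P σ = 1 → σ = 1)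
    -- a 1-dimensional character χ : G → k* and f_χ ∈ K(X)* with σ f_χ = χ(σ) f_χ
    (χ : G →* kˣ)
    (fχ : FX) (hfχ : fχ ≠ 0)
    (hfχeq : ∀ σ : G, σ • fχ = ((χ σ : kˣ) : k) • fχ)
    -- a P = ⟨χ, R_{G,P}⟩_G is the unique 0 ≤ a_P < e_P with χ|_{G_P} = θ_P^{a_P}
    (a : X → ℕ) (ha : ∀ P : X, a P < e P)
    (haχ : ∀ (P : X) (σ : G), σ ∈ MulAction.stabilizer G P → χ σ = (θ P σ) ^ (a P))
    -- f_χⁿ is G-invariant, hence comes from a rational function g on Y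
    (g : FY) (hg : pb g = fχ ^ n) :
    -- for every branch point Q: n⟨v_Q(f_χⁿ)/n⟩ = ⟨χ, R_{G,Q}⟩_G
    ∀ Q : Y, (∃ P : X, π P = Q ∧ 1 < e P) →
      (n : ℚ) * Int.fract ((vY Q g : ℚ) / (n : ℚ)) = ∑ᶠ P ∈ π ⁻¹' {Q}, (a P : ℚ) :=
  chevalley_weil_stmt_4_general k G n hn X Y π horb e he FX FY vX vY hvXmul pb hpbv θ hθ hθfaith χ
    fχ hfχ hfχeq a ha haχ g hg
end

section
/- Let X = X_1 ∪ ... ∪ X_d be a connected nodal curve with irreducible components X_i, G a finite group acting faithfully on X such that Y = X/G is irreducible (so G acts transitively on the components), G_1 the stabilizer of X_1, I_i the set of intersection points of X_i with the other components, and χ: G → k* a 1-dimensional character with restriction χ_1 = χ|_{G_1}. Then the map φ ↦ φ|_{X_1} gives an isomorphism from H^0(X, ω_X)_χ ⊆ [⊕_{i=1}^d H^0(X_i, ω_{X_i}(I_i))]_χ onto its image, and the projection p_1: [⊕_{i=1}^d H^0(X_i, ω_{X_i}(I_i))]_χ → H^0(X_1, ω_{X_1}(I_1))_{χ_1} is an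 isomorphism. -/
/-!
A `χ`-isotypic vector `w` is determined by its component on `X₁`: translating by a `g` with
`g • i₀ = i` gives `p i w = χ(g⁻¹) • g • p i₀ w`, so `w = ∑ᵢ χ(gᵢ⁻¹) • gᵢ • p i₀ w` for any choice
of representatives `gᵢ`. Conversely, for `v` on `X₁` that is `χ`-isotypic under the stabilizer,
`χ(g⁻¹) • g • v` depends only on `g • i₀`, and the same sum is a `χ`-isotypic preimage of `v`.
This is the induced-representation structure `V ≅ Ind_{G₁}^G H⁰(X₁, ω_{X₁}(I₁))`.
-/

open MulAction

section Induced

variable {k G ι V : Type*} [Field k] [Group G] [MulAction G ι]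
  [AddCommGroup V] [Module k V] [DistribMulAction G V]

variable (V) in
def isotypic (χ : G →* kˣ) : Set V :=
  {w | ∀ σ : G, σ • w = ((χ σ : kˣ) : k) • w}

def twistSMul (χ : G →* kˣ) (g : G) (v : V) : V :=
  ((χ g⁻¹ : kˣ) : k) • g • v

theorem smul_twistSMul [SMulCommClass G k V] (χ : G →* kˣ) (σ g : G) (v : V) :
    σ • twistSMul χ g v = ((χ σ : kˣ) : k) • twistSMul χ (σ * g) v := by
  have hχ : ((χ σ : kˣ) : k) * ((χ (σ * g)⁻¹ : kˣ) : k) = ((χ g⁻¹ : kˣ) : k) := by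
    rw [← Units.val_mul, map_inv, map_inv, map_mul, mul_inv, mul_inv_cancel_left]
  rw [twistSMul, twistSMul, smul_comm σ, ← mul_smul, smul_smul, hχ]

theorem twistSMul_eq_of_smul_eq [SMulCommClass G k V] {χ : G →* kˣ} {i₀ : ι} {v : V}
    (hv : ∀ σ ∈ stabilizer G i₀, σ • v = ((χ σ : kˣ) : k) • v)
    {g g' : G} (hgg' : g • i₀ = g' • i₀) :
    twistSMul χ g v = twistSMul χ g' v := by
  obtain ⟨h, rfl⟩ : ∃ h, g' = g * h := ⟨g⁻¹ * g', by group⟩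
  have hh : h ∈ stabilizer G i₀ := by
    rwa [mul_smul, eq_comm, smul_left_cancel_iff] at hgg'
  have hχ : ((χ (g * h)⁻¹ : kˣ) : k) * ((χ h : kˣ) : k) = ((χ g⁻¹ : kˣ) : k) := by
    rw [← Units.val_mul, map_inv, map_inv, map_mul, mul_inv, inv_mul_cancel_right]
  rw [twistSMul, twistSMul, mul_smul, hv h hh, smul_comm g, smul_smul, hχ]

variable {p : ι → V →ₗ[k] V}

theorem proj_smul_eq_twistSMul_of_mem_isotypic
    (hpG : ∀ (σ : G) (i : ι) (w : V), σ • p i w = p (σ • i) (σ • w))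
    {χ : G →* kˣ} {w : V} (hw : w ∈ isotypic V χ) (g : G) (i : ι) :
    p (g • i) w = twistSMul χ g (p i w) := by
  have hχ : ((χ g⁻¹ : kˣ) : k) * ((χ g : kˣ) : k) = 1 := by
    rw [← Units.val_mul, ← map_mul, inv_mul_cancel, map_one, Units.val_one]
  rw [twistSMul, hpG, hw g, map_smul, smul_smul, hχ, one_smul]

theorem eq_sum_twistSMul_of_mem_isotypic [Fintype ι]
    (hpG : ∀ (σ : G) (i : ι) (w : V), σ • p i w = p (σ • i) (σ • w))
    (hpsum : ∀ w : V, ∑ i : ι, p i w = w)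
    {i₀ : ι} {r : ι → G} (hr : ∀ i, r i • i₀ = i)
    {χ : G →* kˣ} {w : V} (hw : w ∈ isotypic V χ) :
    w = ∑ i, twistSMul χ (r i) (p i₀ w) := by
  conv_lhs => rw [← hpsum w]
  refine Finset.sum_congr rfl fun i _ => ?_
  rw [← proj_smul_eq_twistSMul_of_mem_isotypic hpG hw, hr]

theorem proj_twistSMul [DecidableEq ι]
    (hpG : ∀ (σ : G) (i : ι) (w : V), σ • p i w = p (σ • i) (σ • w))
    (hportho : ∀ i j : ι, i ≠ j → ∀ w : V, p i (p j w) = 0)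
    {i₀ : ι} {v : V} (hv : p i₀ v = v) (χ : G →* kˣ) (g : G) (j : ι) :
    p j (twistSMul χ g v) = if j = g • i₀ then twistSMul χ g v else 0 := by
  have hpj : p j (g • v) = g • p (g⁻¹ • j) v := by rw [hpG, smul_inv_smul]
  rw [twistSMul, map_smul, hpj]
  split_ifs with hj
  · rw [hj, inv_smul_smul, hv]
  · have hj' : g⁻¹ • j ≠ i₀ := fun h => hj (by rw [← h, smul_inv_smul])
    rw [← hv, hportho _ _ hj', smul_zero, smul_zero]

theorem sum_twistSMul_mem_isotypic [SMulCommClass G k V] [Fintype ι]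
    {χ : G →* kˣ} {i₀ : ι} {v : V}
    (hv : ∀ σ ∈ stabilizer G i₀, σ • v = ((χ σ : kˣ) : k) • v)
    {r : ι → G} (hr : ∀ i, r i • i₀ = i) :
    ∑ i, twistSMul χ (r i) v ∈ isotypic V χ := by
  intro σ
  have hterm : ∀ i,
      σ • twistSMul χ (r i) v = ((χ σ : kˣ) : k) • twistSMul χ (r (σ • i)) v := by
    intro i
    rw [smul_twistSMul, twistSMul_eq_of_smul_eq hv (g' := r (σ • i)) (by rw [mul_smul, hr, hr])]
  simp only [Finset.smul_sum, hterm]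
  exact Equiv.sum_comp (MulAction.toPerm σ) fun i => ((χ σ : kˣ) : k) • twistSMul χ (r i) v

theorem proj_sum_twistSMul [SMulCommClass G k V] [Fintype ι]
    (hpG : ∀ (σ : G) (i : ι) (w : V), σ • p i w = p (σ • i) (σ • w))
    (hportho : ∀ i j : ι, i ≠ j → ∀ w : V, p i (p j w) = 0)
    {χ : G →* kˣ} {i₀ : ι} {v : V} (hv : p i₀ v = v)
    (hvG : ∀ σ ∈ stabilizer G i₀, σ • v = ((χ σ : kˣ) : k) • v)
    {r : ι → G} (hr : ∀ i, r i • i₀ = i) :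
    p i₀ (∑ i, twistSMul χ (r i) v) = v := by
  classical
  simp only [map_sum, proj_twistSMul hpG hportho hv, hr, Finset.sum_ite_eq, Finset.mem_univ,
    if_true]
  rw [twistSMul_eq_of_smul_eq hvG (g' := 1) (by rw [hr, one_smul]), twistSMul, inv_one,
    map_one, Units.val_one, one_smul, one_smul]

end Induced

theorem chevalley_weil_stmt_14_general
    (k : Type*) [Field k]
    (G : Type*) [Group G]
    -- the d irreducible components, permuted transitively by G
    (ι : Type*) [Fintype ι] [MulAction G ι]
    (htrans : MulAction.IsPretransitive G ι)
    (i₀ : ι)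
    -- V = ⊕_i H⁰(X_i, ω_{X_i}(I_i)) with component projections p i and a
    -- compatible G-action permuting the components
    (V : Type*) [AddCommGroup V] [Module k V]
    [DistribMulAction G V] [SMulCommClass G k V]
    (p : ι → (V →ₗ[k] V))
    (hpsum : ∀ w : V, ∑ i : ι, p i w = w)
    (hportho : ∀ i j : ι, i ≠ j → ∀ w : V, p i (p j w) = 0)
    (hpidem : ∀ (i : ι) (w : V), p i (p i w) = p i w)
    (hpG : ∀ (σ : G) (i : ι) (w : V), σ • (p i w) = p (σ • i) (σ • w))
    -- H⁰(X, ω_X) is a G-stable subspace W of V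
    (W : Submodule k V)
    -- a 1-dimensional character χ of G
    (χ : G →* kˣ) :
    -- φ ↦ φ|_{X₁} is injective (an isomorphism onto its image) on H⁰(X, ω_X)_χ
    Set.InjOn (p i₀)
      {w : V | w ∈ W ∧ ∀ σ : G, σ • w = ((χ σ : kˣ) : k) • w}
    ∧
    -- p₁ : [⊕_i H⁰(X_i, ω_{X_i}(I_i))]_χ → H⁰(X₁, ω_{X₁}(I₁))_{χ₁} is an
    -- isomorphism
    Set.BijOn (p i₀)
      {w : V | ∀ σ : G, σ • w = ((χ σ : kˣ) : k) • w}
      {w : V | p i₀ w = w ∧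
        ∀ σ ∈ MulAction.stabilizer G i₀, σ • w = ((χ σ : kˣ) : k) • w} := by
  choose r hr using htrans.exists_smul_eq i₀
  have hinj : Set.InjOn (p i₀) (isotypic V χ) := fun x hx y hy hxy => by
    rw [eq_sum_twistSMul_of_mem_isotypic hpG hpsum hr hx,
      eq_sum_twistSMul_of_mem_isotypic hpG hpsum hr hy, hxy]
  refine ⟨hinj.mono fun w hw => hw.2, fun w hw => ⟨hpidem i₀ w, fun σ hσ => ?_⟩, hinj, ?_⟩
  · rw [hpG, hw σ, map_smul, mem_stabilizer_iff.mp hσ]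
  · rintro v ⟨hv, hvG⟩
    exact ⟨_, sum_twistSMul_mem_isotypic hvG hr, proj_sum_twistSMul hpG hportho hv hvG hr⟩

theorem chevalley_weil_stmt_14
    (k : Type*) [Field k] [IsAlgClosed k]
    (G : Type*) [Group G] [Fintype G]
    (hchar : ∀ p : ℕ, p.Prime → (p : k) = 0 → ¬ p ∣ Fintype.card G)
    -- the d irreducible components, permuted transitively by G
    (ι : Type*) [Fintype ι] [MulAction G ι]
    (htrans : MulAction.IsPretransitive G ι)
    (d : ℕ) (hd : Fintype.card ι = d)
    (i₀ : ι)
    -- V = ⊕_i H⁰(X_i, ω_{X_i}(I_i)) with component projections p i and a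
    -- compatible G-action permuting the components
    (V : Type*) [AddCommGroup V] [Module k V]
    [DistribMulAction G V] [SMulCommClass G k V]
    (p : ι → (V →ₗ[k] V))
    (hpsum : ∀ w : V, ∑ i : ι, p i w = w)
    (hportho : ∀ i j : ι, i ≠ j → ∀ w : V, p i (p j w) = 0)
    (hpidem : ∀ (i : ι) (w : V), p i (p i w) = p i w)
    (hpG : ∀ (σ : G) (i : ι) (w : V), σ • (p i w) = p (σ • i) (σ • w))
    -- H⁰(X, ω_X) is a G-stable subspace W of V
    (W : Submodule k V)
    (hWG : ∀ (σ : G), ∀ w ∈ W, σ • w ∈ W)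
    -- a 1-dimensional character χ of G
    (χ : G →* kˣ) :
    -- φ ↦ φ|_{X₁} is injective (an isomorphism onto its image) on H⁰(X, ω_X)_χ
    Set.InjOn (p i₀)
      {w : V | w ∈ W ∧ ∀ σ : G, σ • w = ((χ σ : kˣ) : k) • w}
    ∧
    -- p₁ : [⊕_i H⁰(X_i, ω_{X_i}(I_i))]_χ → H⁰(X₁, ω_{X₁}(I₁))_{χ₁} is an
    -- isomorphism
    Set.BijOn (p i₀)
      {w : V | ∀ σ : G, σ • w = ((χ σ : kˣ) : k) • w}
      {w : V | p i₀ w = w ∧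
        ∀ σ ∈ MulAction.stabilizer G i₀, σ • w = ((χ σ : kˣ) : k) • w} :=
  chevalley_weil_stmt_14_general k G ι htrans i₀ V p hpsum hportho hpidem hpG W χ
end
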